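/- arXiv:1712.08371 — 5 statements merged into one kernel-verified Lean document; each statement's English description precedes it below -/
import Mathlib

section
/- For all complex numbers a, b, z with b not equal to a nonpositive integer, Kummer's transformation holds: ₁F₁(a; b; z) = e^z · ₁F₁(b−a; b; −z). -/
open Complex

/-- The Kummer confluent hypergeometric function `₁F₁(a; b; z)`,
defined by its everywhere convergent power series. -/
noncomputable def kummer (a b z : ℂ) : ℂ :=
  ∑' n : ℕ, ((ascPochhammer ℂ n).eval a / (ascPochhammer ℂ n).eval b) * z ^ n / n.factorial

/-!
Multiplying the series of `e^z` and of `₁F₁(b - a; b; -z)` by the Cauchy product, the coefficient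
of `zⁿ / n!` is `∑ₖ C(n, k) (-1)ᵏ (b - a)ₖ / (b)ₖ`. Clearing the denominator `(b)ₙ = (b)ₖ (b + k)ₙ₋ₖ`,
this sum equals `(a)ₙ / (b)ₙ` by the Chu–Vandermonde identity for falling factorials
`(x + y)^{(n)} = ∑ₖ C(n, k) x^{(k)} y^{(n-k)}` at `x = a - b`, `y = b + n - 1`.
-/

open Polynomial Finset

theorem ascPochhammer_eval_eq_sum_antidiagonal {R : Type*} [CommRing R] (a b : R) (n : ℕ) :
    (ascPochhammer R n).eval a = ∑ ij ∈ antidiagonal n, (n.choose ij.1 : R) *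
      ((-1) ^ ij.1 * (ascPochhammer R ij.1).eval (b - a)) *
        (ascPochhammer R ij.2).eval (b + ij.1) := by
  have desc_eq (r : R) (k : ℕ) :
      (descPochhammer ℤ k).smeval r = (ascPochhammer R k).eval (r - k + 1) := by
    rw [descPochhammer_smeval_eq_ascPochhammer, ascPochhammer_smeval_eq_eval]
  have desc_eq_neg (r : R) (k : ℕ) :
      (descPochhammer ℤ k).smeval r = (-1) ^ k * (ascPochhammer R k).eval (-r) := by
    rw [desc_eq, ascPochhammer_eval_neg_eq_descPochhammer, descPochhammer_eval_eq_ascPochhammer,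
      ← mul_assoc, ← mul_pow]
    simp
  have vandermonde := Ring.descPochhammer_smeval_add (R := R) n (Commute.all (a - b) (b + n - 1))
  rw [desc_eq, show a - b + (b + n - 1) - n + 1 = a by ring] at vandermonde
  rw [vandermonde]
  refine sum_congr rfl fun ⟨i, j⟩ hij => ?_
  rw [HasAntidiagonal.mem_antidiagonal] at hij
  rw [desc_eq_neg, desc_eq, neg_sub, ← hij,
    show b + ((i + j : ℕ) : R) - 1 - j + 1 = b + i by push_cast; ring]
  ring

theorem ascPochhammer_eval_ne_zero {b : ℂ} (hb : ∀ n : ℕ, b ≠ -(n : ℂ)) (n : ℕ) :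
    (ascPochhammer ℂ n).eval b ≠ 0 := by
  rw [Ne, ascPochhammer_eval_eq_zero_iff]
  rintro ⟨k, -, hk⟩
  exact hb k (by rw [hk, neg_neg])

theorem sum_antidiagonal_choose_ascPochhammer_div {b : ℂ} (hb : ∀ n : ℕ, b ≠ -(n : ℂ))
    (a : ℂ) (n : ℕ) :
    ∑ ij ∈ antidiagonal n, (n.choose ij.1 : ℂ) * (-1) ^ ij.1 *
      ((ascPochhammer ℂ ij.1).eval (b - a) / (ascPochhammer ℂ ij.1).eval b) =
      (ascPochhammer ℂ n).eval a / (ascPochhammer ℂ n).eval b := by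
  rw [ascPochhammer_eval_eq_sum_antidiagonal a b n, sum_div]
  refine sum_congr rfl fun ⟨i, j⟩ hij => ?_
  rw [HasAntidiagonal.mem_antidiagonal] at hij
  have hsplit : (ascPochhammer ℂ n).eval b =
      (ascPochhammer ℂ i).eval b * (ascPochhammer ℂ j).eval (b + i) := by
    rw [← hij, ← ascPochhammer_mul, eval_mul, eval_comp]
    simp
  have hi := ascPochhammer_eval_ne_zero hb i
  have hj : (ascPochhammer ℂ j).eval (b + i) ≠ 0 :=
    ascPochhammer_eval_ne_zero (fun m h => hb (m + i) (by push_cast; linear_combination h)) j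
  rw [hsplit]
  field_simp

theorem kummer_term_mul_exp_term (a b z : ℂ) (i j : ℕ) :
    (ascPochhammer ℂ i).eval (b - a) / (ascPochhammer ℂ i).eval b * (-z) ^ i / i.factorial *
      (z ^ j / j.factorial) =
      (i + j).choose i * (-1) ^ i *
        ((ascPochhammer ℂ i).eval (b - a) / (ascPochhammer ℂ i).eval b) *
          (z ^ (i + j) / (i + j).factorial) := by
  rw [← Nat.add_choose_mul_factorial_mul_factorial i j, Nat.choose_symm_add, neg_pow, pow_add]
  have : ((i + j).choose j : ℂ) ≠ 0 := by
    exact_mod_cast ((i + j).choose_pos (Nat.le_add_left j i)).ne'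
  push_cast
  field_simp

/- Up to the factor `Γ(b)`, these are the terms of the regularized series `₁F̃₁(c; b; w)`, whose
radius of convergence is infinite. -/
theorem summable_norm_kummer_term (c b w : ℂ) (hb : ∀ n : ℕ, b ≠ -(n : ℂ)) :
    Summable fun n : ℕ =>
      ‖(ascPochhammer ℂ n).eval c / (ascPochhammer ℂ n).eval b * w ^ n / n.factorial‖ := by
  set p := regularizedHGFunSeries {c} {b}
  have hp : p.radius = ⊤ := radius_regularizedHGFunSeries_eq_top (by simp)
  refine ((p.summable_norm_apply (x := w) (by simp [hp])).mul_left ‖Gamma b‖).congr fun n => ?_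
  rw [← norm_mul]
  congr 1
  simp only [p, regularizedHGFunSeries, FormalMultilinearSeries.ofScalars_apply_eq,
    regularizedHGFunCoeff, smul_eq_mul, Multiset.map_singleton, Multiset.prod_singleton]
  rw [← Gamma_add_nat_div_Gamma_eq b hb]
  have := Gamma_ne_zero hb
  field_simp

/-- Kummer's transformation: `₁F₁(a; b; z) = e^z ₁F₁(b − a; b; −z)`. -/
theorem kummer_transformation (a b z : ℂ) (hb : ∀ n : ℕ, b ≠ -(n : ℂ)) :
    kummer a b z = Complex.exp z * kummer (b - a) b (-z) := by
  rw [kummer, kummer, exp_eq_exp_ℂ, NormedSpace.exp_eq_tsum_div, mul_comm,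
    tsum_mul_tsum_eq_tsum_sum_antidiagonal_of_summable_norm
      (summable_norm_kummer_term (b - a) b (-z) hb) (NormedSpace.norm_expSeries_div_summable z)]
  refine tsum_congr fun n => ?_
  rw [← sum_antidiagonal_choose_ascPochhammer_div hb a n, mul_div_assoc, sum_mul]
  refine sum_congr rfl fun ⟨i, j⟩ hij => ?_
  rw [HasAntidiagonal.mem_antidiagonal] at hij
  subst hij
  exact (kummer_term_mul_exp_term a b z i j).symm
end

section
/- For complex a, b with Re(b) > Re(a) > 0 and any z ∈ ℂ, the Euler integral representation holds: ₁F₁(a; b; z) = (Γ(b) / (Γ(a) Γ(b−a))) · ∫₀¹ t^{a−1} (1−t)^{b−a−1} e^{z t} dt. -/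
/-!
Expand `exp (z t)` in its power series and integrate term by term against the Beta density
`t ^ (a - 1) * (1 - t) ^ (b - a - 1)`; the interchange is justified by the domination
`‖z t‖ ^ n / n! ≤ ‖z‖ ^ n / n!` on `[0, 1]`. The `n`-th term becomes `z ^ n / n! * B(a + n, b - a)`,
and `Γ(b) B(a + n, b - a) / (Γ(a) Γ(b - a)) = Γ(a + n) Γ(b) / (Γ(a) Γ(b + n)) = (a)ₙ / (b)ₙ`.
-/

open Complex

open MeasureTheory Set

theorem MeasureTheory.integral_mul_exp_eq_tsum {α : Type*} [MeasurableSpace α] {μ : Measure α}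
    {f g : α → ℂ} {C : ℝ} (hf : Integrable f μ) (hg : AEStronglyMeasurable g μ)
    (hgC : ∀ᵐ x ∂μ, ‖g x‖ ≤ C) :
    ∫ x, f x * exp (g x) ∂μ = ∑' n : ℕ, (∫ x, f x * g x ^ n ∂μ) / n.factorial := by
  have hbound (n : ℕ) : ∀ᵐ x ∂μ, ‖g x ^ n / n.factorial‖ ≤ C ^ n / n.factorial := by
    filter_upwards [hgC] with x hx
    rw [norm_div, norm_pow, Complex.norm_natCast]
    gcongr
  have hint (n : ℕ) : Integrable (fun x ↦ f x * (g x ^ n / n.factorial)) μ :=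
    hf.mul_bdd (by fun_prop) (hbound n)
  have hsum : Summable fun n : ℕ ↦ ∫ x, ‖f x * (g x ^ n / n.factorial)‖ ∂μ := by
    refine .of_nonneg_of_le (fun n ↦ integral_nonneg fun x ↦ norm_nonneg _) (fun n ↦ ?_)
      ((Real.summable_pow_div_factorial C).mul_left (∫ x, ‖f x‖ ∂μ))
    rw [← integral_mul_const]
    refine integral_mono_ae (hint n).norm (hf.norm.mul_const _) ?_
    filter_upwards [hbound n] with x hx
    rw [norm_mul]
    gcongr
  calc ∫ x, f x * exp (g x) ∂μ
      = ∫ x, ∑' n : ℕ, f x * (g x ^ n / n.factorial) ∂μ := by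
        simp_rw [tsum_mul_left, exp_eq_exp_ℂ, (NormedSpace.expSeries_div_hasSum_exp _).tsum_eq]
    _ = ∑' n : ℕ, ∫ x, f x * (g x ^ n / n.factorial) ∂μ :=
        (integral_tsum_of_summable_integral_norm hint hsum).symm
    _ = ∑' n : ℕ, (∫ x, f x * g x ^ n ∂μ) / n.factorial := by
        simp_rw [← mul_div_assoc, integral_div]

theorem intervalIntegral_mul_exp_mul_eq_tsum {f : ℝ → ℂ}
    (hf : IntervalIntegrable f volume 0 1) (z : ℂ) :
    ∫ t in (0:ℝ)..1, f t * exp (z * t) =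
      ∑' n : ℕ, z ^ n / n.factorial * ∫ t in (0:ℝ)..1, f t * (t : ℂ) ^ n := by
  have hbound : ∀ᵐ t : ℝ ∂volume.restrict (Ioc 0 1), ‖z * t‖ ≤ ‖z‖ := by
    filter_upwards [ae_restrict_mem measurableSet_Ioc] with t ht
    rw [norm_mul, norm_real, Real.norm_of_nonneg ht.1.le]
    exact mul_le_of_le_one_right (norm_nonneg z) ht.2
  simp only [intervalIntegral.integral_of_le zero_le_one]
  rw [integral_mul_exp_eq_tsum hf.1 (by fun_prop) hbound]
  refine tsum_congr fun n ↦ ?_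
  simp_rw [mul_pow, mul_left_comm _ (z ^ n), integral_const_mul]
  ring

namespace Complex

theorem betaIntegral_add_nat (u v : ℂ) (n : ℕ) :
    betaIntegral (u + n) v =
      ∫ t in (0:ℝ)..1, (t : ℂ) ^ (u - 1) * (1 - (t : ℂ)) ^ (v - 1) * (t : ℂ) ^ n := by
  refine intervalIntegral.integral_congr_ae (.of_forall fun t ht ↦ ?_)
  rw [uIoc_of_le zero_le_one] at ht
  have ht0 : (t : ℂ) ≠ 0 := ofReal_ne_zero.mpr ht.1.ne'
  rw [mul_right_comm, ← cpow_natCast, ← cpow_add _ _ ht0]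
  ring_nf

theorem Gamma_add_nat_eq_Gamma_mul_ascPochhammer {x : ℂ} (hx : 0 < x.re) (n : ℕ) :
    Gamma (x + n) = Gamma x * (ascPochhammer ℂ n).eval x := by
  have hx_ne : ∀ k : ℕ, x ≠ -k := fun k h ↦ by
    have := congrArg re h
    simp only [neg_re, natCast_re] at this
    linarith [k.cast_nonneg (α := ℝ)]
  rw [← Gamma_add_nat_div_Gamma_eq x hx_ne, mul_div_cancel₀ _ (Gamma_ne_zero hx_ne)]

theorem Gamma_div_mul_betaIntegral_add_nat {a b : ℂ} (ha : 0 < a.re) (hab : a.re < b.re)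
    (n : ℕ) :
    Gamma b / (Gamma a * Gamma (b - a)) * betaIntegral (a + n) (b - a) =
      (ascPochhammer ℂ n).eval a / (ascPochhammer ℂ n).eval b := by
  have hb : 0 < b.re := ha.trans hab
  have hc : 0 < (b - a).re := by rw [sub_re]; linarith
  have han : 0 < (a + n).re := by rw [add_re, natCast_re]; positivity
  have hbn : Gamma (b + n) ≠ 0 := Gamma_ne_zero_of_re_pos (by rw [add_re, natCast_re]; positivity)
  have hbeta := Gamma_mul_Gamma_eq_betaIntegral han hc
  rw [show a + n + (b - a) = b + n by ring] at hbeta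
  rw [Gamma_add_nat_eq_Gamma_mul_ascPochhammer ha,
    Gamma_add_nat_eq_Gamma_mul_ascPochhammer hb] at hbeta
  rw [Gamma_add_nat_eq_Gamma_mul_ascPochhammer hb] at hbn
  have hGac : Gamma a * Gamma (b - a) ≠ 0 :=
    mul_ne_zero (Gamma_ne_zero_of_re_pos ha) (Gamma_ne_zero_of_re_pos hc)
  rw [div_mul_eq_mul_div, div_eq_div_iff hGac (right_ne_zero_of_mul hbn)]
  linear_combination -hbeta

end Complex

/-- Euler integral representation of `₁F₁(a; b; z)` for `Re b > Re a > 0`. -/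
theorem kummer_euler_integral (a b : ℂ) (ha : 0 < a.re) (hab : a.re < b.re) (z : ℂ) :
    kummer a b z = (Complex.Gamma b / (Complex.Gamma a * Complex.Gamma (b - a))) *
      ∫ t in (0:ℝ)..1, (t : ℂ) ^ (a - 1) * ((1 : ℂ) - (t : ℂ)) ^ (b - a - 1) *
        Complex.exp (z * (t : ℂ)) := by
  have hc : 0 < (b - a).re := by rw [sub_re]; linarith
  rw [kummer, intervalIntegral_mul_exp_mul_eq_tsum (betaIntegral_convergent ha hc),
    ← tsum_mul_left]
  refine tsum_congr fun n ↦ ?_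
  rw [← betaIntegral_add_nat, mul_left_comm, Gamma_div_mul_betaIntegral_add_nat ha hab]
  ring
end

section
/- Let α > 0 be real and a, b ∈ ℂ with Re(b) > Re(a) > 0, and suppose αn + a is not a nonpositive integer for every natural number n. Then for every z ∈ ℂ, the Wright series with equal parameters satisfies the integral representation ∑_{n=0}^∞ (Γ(αn+a)/Γ(αn+b)) · z^n/n! = (1/Γ(b−a)) · ∫₀¹ t^{a−1} (1−t)^{b−a−1} exp(z t^α) dt. -/
/-!
Expanding `exp (z t^α)` in its power series, the bound `‖z t^α‖ ≤ ‖z‖` on `(0, 1]` makes the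
series dominated by `‖z‖ⁿ / n!` times the integrable beta kernel, so it may be integrated term by
term. The `n`-th term is `zⁿ / n!` times the beta integral `B(αn + a, b - a)`, which equals
`Γ(b - a)` times the Gamma ratio `Γ(αn + a) / Γ(αn + b)`.
-/

open Complex MeasureTheory Set

theorem MeasureTheory.integral_mul_cexp_eq_tsum {X : Type*} [MeasurableSpace X] {μ : Measure X}
    {f g : X → ℂ} {C : ℝ} (hf : Integrable f μ) (hg : AEStronglyMeasurable g μ)
    (hgC : ∀ᵐ x ∂μ, ‖g x‖ ≤ C) :
    ∫ x, f x * cexp (g x) ∂μ = ∑' n : ℕ, ∫ x, f x * (g x ^ n / n.factorial) ∂μ := by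
  have hbound : ∀ n : ℕ, ∀ᵐ x ∂μ, ‖g x ^ n / n.factorial‖ ≤ C ^ n / n.factorial := by
    intro n
    filter_upwards [hgC] with x hx
    rw [norm_div, norm_pow, Complex.norm_natCast]
    gcongr
  have hint : ∀ n : ℕ, Integrable (fun x => f x * (g x ^ n / n.factorial)) μ := fun n =>
    hf.mul_bdd (by fun_prop) (hbound n)
  have hsummable : Summable fun n : ℕ => ∫ x, ‖f x * (g x ^ n / n.factorial)‖ ∂μ := by
    refine Summable.of_nonneg_of_le (fun n => integral_nonneg fun x => norm_nonneg _) (fun n => ?_)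
      ((Real.summable_pow_div_factorial C).mul_right (∫ x, ‖f x‖ ∂μ))
    calc ∫ x, ‖f x * (g x ^ n / n.factorial)‖ ∂μ
        ≤ ∫ x, C ^ n / n.factorial * ‖f x‖ ∂μ := by
          refine integral_mono_ae (hint n).norm (hf.norm.const_mul _) ?_
          filter_upwards [hbound n] with x hx
          rw [norm_mul, mul_comm]
          exact mul_le_mul_of_nonneg_right hx (norm_nonneg _)
      _ = C ^ n / n.factorial * ∫ x, ‖f x‖ ∂μ := integral_const_mul _ _
  rw [integral_tsum_of_summable_integral_norm hint hsummable]
  simp_rw [tsum_mul_left, exp_eq_exp_ℂ, NormedSpace.exp_eq_tsum_div]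

theorem Complex.Gamma_div_Gamma_add {s c : ℂ} (hs : 0 < s.re) (hc : 0 < c.re) :
    Gamma s / Gamma (s + c) = betaIntegral s c / Gamma c := by
  rw [div_eq_div_iff (Gamma_ne_zero_of_re_pos (by simpa using add_pos hs hc))
    (Gamma_ne_zero_of_re_pos hc), Gamma_mul_Gamma_eq_betaIntegral hs hc, mul_comm]

theorem Complex.ofReal_cpow_mul_cpow_pow {t : ℝ} (ht : 0 < t) (a α : ℂ) (n : ℕ) :
    (t : ℂ) ^ a * ((t : ℂ) ^ α) ^ n = (t : ℂ) ^ (α * n + a) := by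
  rw [← cpow_nat_mul, ← cpow_add _ _ (by exact_mod_cast ht.ne'), add_comm, mul_comm]

theorem Complex.integral_cpow_mul_rpow_pow_eq_betaIntegral (α : ℝ) (a c : ℂ) (n : ℕ) :
    ∫ t in (0:ℝ)..1, (t : ℂ) ^ (a - 1) * (1 - (t : ℂ)) ^ (c - 1) * ((t : ℂ) ^ (α : ℂ)) ^ n =
      betaIntegral (α * n + a) c := by
  refine intervalIntegral.integral_congr_ae (Filter.Eventually.of_forall fun t ht => ?_)
  rw [uIoc_of_le zero_le_one] at ht
  rw [mul_right_comm, ofReal_cpow_mul_cpow_pow ht.1, add_sub_assoc]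

theorem wright_equal_params_integral_general (α : ℝ) (hα : 0 < α) (a b : ℂ)
    (ha : 0 < a.re) (hab : a.re < b.re) (z : ℂ) :
    ∑' n : ℕ, (Complex.Gamma ((α : ℂ) * n + a) / Complex.Gamma ((α : ℂ) * n + b)) *
        z ^ n / n.factorial =
      (1 / Complex.Gamma (b - a)) *
        ∫ t in (0:ℝ)..1, (t : ℂ) ^ (a - 1) * ((1 : ℂ) - (t : ℂ)) ^ (b - a - 1) *
          Complex.exp (z * (t : ℂ) ^ (α : ℂ)) := by
  have hba : 0 < (b - a).re := by simpa using hab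
  have hkernel : IntegrableOn (fun t : ℝ => (t : ℂ) ^ (a - 1) * (1 - (t : ℂ)) ^ (b - a - 1))
      (Ioc 0 1) :=
    (intervalIntegrable_iff_integrableOn_Ioc_of_le zero_le_one).1 (betaIntegral_convergent ha hba)
  have hexponent : Continuous fun t : ℝ => z * (t : ℂ) ^ (α : ℂ) :=
    continuous_const.mul (continuous_ofReal_cpow_const (by simpa using hα))
  have hexponent_le : ∀ᵐ t : ℝ ∂volume.restrict (Ioc 0 1), ‖z * (t : ℂ) ^ (α : ℂ)‖ ≤ ‖z‖ := by
    filter_upwards [ae_restrict_mem measurableSet_Ioc] with t ht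
    rw [norm_mul, norm_cpow_eq_rpow_re_of_pos ht.1, ofReal_re]
    exact mul_le_of_le_one_right (norm_nonneg z) (Real.rpow_le_one ht.1.le ht.2 hα.le)
  rw [intervalIntegral.integral_of_le zero_le_one,
    integral_mul_cexp_eq_tsum hkernel hexponent.aestronglyMeasurable hexponent_le,
    ← tsum_mul_left]
  refine tsum_congr fun n => ?_
  have hn : 0 < ((α : ℂ) * n + a).re := by
    simp only [add_re, mul_re, ofReal_re, natCast_re, ofReal_im, natCast_im, mul_zero, sub_zero]
    positivity
  calc Gamma (α * n + a) / Gamma (α * n + b) * z ^ n / n.factorial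
      = 1 / Gamma (b - a) * (betaIntegral (α * n + a) (b - a) * (z ^ n / n.factorial)) := by
        rw [show (α : ℂ) * n + b = α * n + a + (b - a) by ring, Gamma_div_Gamma_add hn hba]
        ring
    _ = 1 / Gamma (b - a) * ∫ t in Ioc (0:ℝ) 1,
          (t : ℂ) ^ (a - 1) * (1 - (t : ℂ)) ^ (b - a - 1) *
            ((z * (t : ℂ) ^ (α : ℂ)) ^ n / n.factorial) := by
        rw [← intervalIntegral.integral_of_le zero_le_one,
          ← integral_cpow_mul_rpow_pow_eq_betaIntegral, ← intervalIntegral.integral_mul_const]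
        congr 2 with t
        ring

/-- Integral representation of the Wright function `₁Ψ₁((α,a);(α,b) | z)` with equal
parameters, for `Re b > Re a > 0`. -/
theorem wright_equal_params_integral (α : ℝ) (hα : 0 < α) (a b : ℂ)
    (ha : 0 < a.re) (hab : a.re < b.re)
    (hpole : ∀ n m : ℕ, (α : ℂ) * (n : ℂ) + a ≠ -(m : ℂ)) (z : ℂ) :
    ∑' n : ℕ, (Complex.Gamma ((α : ℂ) * n + a) / Complex.Gamma ((α : ℂ) * n + b)) *
        z ^ n / n.factorial =
      (1 / Complex.Gamma (b - a)) *
        ∫ t in (0:ℝ)..1, (t : ℂ) ^ (a - 1) * ((1 : ℂ) - (t : ℂ)) ^ (b - a - 1) *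
          Complex.exp (z * (t : ℂ) ^ (α : ℂ)) :=
  wright_equal_params_integral_general α hα a b ha hab z
end

section
/- Let α, β > 0 be real with κ := 1 + β − α > 0, and let a, b ∈ ℂ be such that αn + a is not a nonpositive integer for every natural number n. Then the Wright series ∑_{n=0}^∞ (Γ(αn+a)/Γ(βn+b)) · z^n/n! converges absolutely for every z ∈ ℂ; in particular ₁Ψ₁((α,a); (β,b) | ·) is an entire function of z. -/
/-!
For large `n` the points `αn + a` and `βn + b` lie far in the right half-plane. There Euler's
integral gives `‖Γ(s)‖ ≤ Γ(Re s)`, and the beta integral gives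
`‖Γ(s)‖ ≥ Γ(Re s) ‖Γ(1 + i Im s)‖` once `Re s > 1`. Hence the series is eventually dominated
by a constant multiple of the real Wright series with parameters `Re a`, `Re b` and argument
`‖z‖`. By log-convexity of `Γ`, the ratio of consecutive terms of that series is at most of order
`‖z‖ n^(α - β - 1)`, which tends to `0` because `κ > 0`; the ratio test concludes.
-/

open Filter Topology Set Asymptotics MeasureTheory

namespace Real

lemma log_Gamma_add_one_sub_log_Gamma {y : ℝ} (hy : 0 < y) :
    log (Gamma (y + 1)) - log (Gamma y) = log y := by
  rw [Gamma_add_one hy.ne', log_mul hy.ne' (Gamma_pos_of_pos hy).ne']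
  ring

lemma Gamma_add_le_Gamma_mul_rpow {x c : ℝ} (hx : 0 < x) (hc : 0 < c) :
    Gamma (x + c) ≤ Gamma x * (x + c) ^ c := by
  have hxc : 0 < x + c := by linarith
  have hslope := convexOn_log_Gamma.slope_mono_adjacent (x := x) (y := x + c) (z := x + c + 1)
    hx (by simp only [mem_Ioi]; linarith) (by linarith) (by linarith)
  simp only [Function.comp_apply, add_sub_cancel_left, log_Gamma_add_one_sub_log_Gamma hxc,
    div_one, div_le_iff₀ hc] at hslope
  rw [← exp_log (Gamma_pos_of_pos hxc), ← exp_log (Gamma_pos_of_pos hx), rpow_def_of_pos hxc,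
    ← exp_add]
  exact exp_le_exp.2 (by linarith)

lemma Gamma_mul_rpow_le_Gamma_add {x c : ℝ} (hx : 1 < x) (hc : 0 < c) :
    Gamma x * (x - 1) ^ c ≤ Gamma (x + c) := by
  have hx1 : 0 < x - 1 := by linarith
  have hslope := convexOn_log_Gamma.slope_mono_adjacent (x := x - 1) (y := x) (z := x + c)
    hx1 (by simp only [mem_Ioi]; linarith) (by linarith) (by linarith)
  have hstep := log_Gamma_add_one_sub_log_Gamma hx1
  rw [sub_add_cancel] at hstep
  simp only [Function.comp_apply, sub_sub_cancel, add_sub_cancel_left, hstep, div_one,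
    le_div_iff₀ hc] at hslope
  rw [← exp_log (Gamma_pos_of_pos (by linarith : 0 < x + c)),
    ← exp_log (Gamma_pos_of_pos (by linarith : 0 < x)), rpow_def_of_pos hx1, ← exp_add]
  exact exp_le_exp.2 (by linarith)

end Real

namespace Complex

lemma norm_Gamma_le_Gamma_re {s : ℂ} (hs : 0 < s.re) : ‖Gamma s‖ ≤ Real.Gamma s.re := by
  rw [Gamma_eq_integral hs, Real.Gamma_eq_integral hs, GammaIntegral]
  refine (norm_integral_le_integral_norm _).trans_eq
    (setIntegral_congr_fun measurableSet_Ioi fun x hx => ?_)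
  rw [norm_mul, norm_real, Real.norm_of_nonneg (Real.exp_pos _).le,
    norm_cpow_eq_rpow_re_of_pos hx, sub_re, one_re]

lemma norm_ofReal_cpow_le {x : ℝ} (hx : 0 ≤ x) (w : ℂ) : ‖(x : ℂ) ^ w‖ ≤ x ^ w.re := by
  simpa [arg_ofReal_of_nonneg hx, abs_of_nonneg hx] using norm_cpow_le (x : ℂ) w

lemma norm_betaIntegral_le {u v : ℂ} (hu : 0 < u.re) (hv : 1 ≤ v.re) :
    ‖betaIntegral u v‖ ≤ 1 / u.re := by
  have hbound : ∀ t ∈ Ioc (0 : ℝ) 1,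
      ‖(t : ℂ) ^ (u - 1) * (1 - (t : ℂ)) ^ (v - 1)‖ ≤ t ^ (u.re - 1) := by
    intro t ht
    have h1t : 0 ≤ 1 - t := sub_nonneg.2 ht.2
    rw [norm_mul, ← mul_one (t ^ (u.re - 1)), ← ofReal_one, ← ofReal_sub]
    refine mul_le_mul ((norm_ofReal_cpow_le ht.1.le _).trans_eq (by simp)) ?_ (norm_nonneg _)
      (Real.rpow_nonneg ht.1.le _)
    refine (norm_ofReal_cpow_le h1t _).trans (Real.rpow_le_one h1t (by linarith [ht.1]) ?_)
    simpa using hv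
  calc ‖betaIntegral u v‖ ≤ ∫ t in (0 : ℝ)..1, t ^ (u.re - 1) :=
        intervalIntegral.norm_integral_le_of_norm_le zero_le_one (ae_of_all _ hbound)
          (intervalIntegral.intervalIntegrable_rpow' (by linarith))
    _ = 1 / u.re := by
        rw [integral_rpow (Or.inl (by linarith)), sub_add_cancel, Real.one_rpow,
          Real.zero_rpow hu.ne', sub_zero]

lemma Gamma_re_mul_norm_Gamma_one_add_im_le {s : ℂ} (hs : 1 < s.re) :
    Real.Gamma s.re * ‖Gamma (1 + s.im * I)‖ ≤ ‖Gamma s‖ := by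
  set x := s.re
  have hx1 : 0 < x - 1 := by linarith
  have hu : 0 < ((x - 1 : ℝ) : ℂ).re := by simpa using hx1
  have hv : (1 + s.im * I).re = 1 := by simp
  have hsplit : ((x - 1 : ℝ) : ℂ) + (1 + s.im * I) = s := by
    push_cast
    linear_combination re_add_im s
  have hbeta := congrArg norm (Gamma_mul_Gamma_eq_betaIntegral hu (hv.symm ▸ one_pos))
  rw [hsplit, norm_mul, norm_mul, Gamma_ofReal, norm_real,
    Real.norm_of_nonneg (Real.Gamma_pos_of_pos hx1).le] at hbeta
  have hB := norm_betaIntegral_le hu hv.ge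
  rw [ofReal_re] at hB
  have hGx : Real.Gamma x = (x - 1) * Real.Gamma (x - 1) := by
    rw [← Real.Gamma_add_one hx1.ne', sub_add_cancel]
  calc Real.Gamma x * ‖Gamma (1 + s.im * I)‖
      = (x - 1) * (‖Gamma s‖ * ‖betaIntegral _ _‖) := by rw [hGx, ← hbeta]; ring
    _ ≤ (x - 1) * (‖Gamma s‖ * (1 / (x - 1))) := by gcongr
    _ = ‖Gamma s‖ := by field_simp

lemma norm_Gamma_div_Gamma_le {s w : ℂ} (hs : 0 < s.re) (hw : 1 < w.re) :
    ‖Gamma s / Gamma w‖ ≤ Real.Gamma s.re / Real.Gamma w.re / ‖Gamma (1 + w.im * I)‖ := by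
  have hC : 0 < ‖Gamma (1 + w.im * I)‖ := norm_pos_iff.2 (Gamma_ne_zero_of_re_pos (by simp))
  rw [norm_div, div_div]
  exact div_le_div₀ (Real.Gamma_pos_of_pos hs).le (norm_Gamma_le_Gamma_re hs)
    (by positivity) (Gamma_re_mul_norm_Gamma_one_add_im_le hw)

end Complex

lemma isTheta_affine_rpow_atTop {c : ℝ} (hc : 0 < c) (p μ : ℝ) :
    (fun t : ℝ => (c * t + p) ^ μ) =Θ[atTop] fun t => t ^ μ := by
  have hequiv : (fun t : ℝ => c * t + p) ~[atTop] fun t => c * t :=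
    IsEquivalent.refl.add_isLittleO
      ((isLittleO_const_id_atTop p).trans_isBigO (isBigO_self_const_mul hc.ne' id atTop))
  refine (hequiv.isTheta.trans (isTheta_rfl.const_mul_left hc.ne')).rpow ?_ ?_
  · filter_upwards [eventually_ge_atTop (-p / c)] with t ht
    rw [div_le_iff₀ hc] at ht
    simp only [Pi.zero_apply]
    linarith
  · filter_upwards [eventually_ge_atTop 0] with t ht using ht

lemma tendsto_affine_rpow_div_affine_rpow_mul_atTop {c d : ℝ} (hc : 0 < c) (hd : 0 < d)
    (p q : ℝ) {μ ν : ℝ} (hμν : μ < ν + 1) :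
    Tendsto (fun t : ℝ => (c * t + p) ^ μ / ((d * t + q) ^ ν * (t + 1))) atTop (𝓝 0) := by
  have hΘ : (fun t : ℝ => (c * t + p) ^ μ / ((d * t + q) ^ ν * (t + 1))) =Θ[atTop]
      fun t => t ^ μ / (t ^ ν * t ^ (1 : ℝ)) :=
    (isTheta_affine_rpow_atTop hc p μ).div
      ((isTheta_affine_rpow_atTop hd q ν).mul
        (by simpa using isTheta_affine_rpow_atTop one_pos 1 1))
  refine hΘ.isBigO.trans_tendsto ((tendsto_rpow_neg_atTop (sub_pos.2 hμν)).congr' ?_)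
  filter_upwards [eventually_gt_atTop 0] with t ht
  rw [← Real.rpow_add ht, ← Real.rpow_sub ht]
  ring_nf

lemma eventually_lt_mul_natCast_add {c : ℝ} (hc : 0 < c) (p M : ℝ) :
    ∀ᶠ n : ℕ in atTop, M < c * n + p :=
  ((tendsto_natCast_atTop_atTop.const_mul_atTop hc).atTop_add
    tendsto_const_nhds).eventually_gt_atTop M

noncomputable def realWrightTerm (α β A B R : ℝ) (n : ℕ) : ℝ :=
  Real.Gamma (α * n + A) / Real.Gamma (β * n + B) * R ^ n / n.factorial

section RealWrightTerm

variable {α β A B R : ℝ}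

lemma realWrightTerm_nonneg (hR : 0 ≤ R) {n : ℕ} (hx : 0 < α * n + A) (hy : 0 < β * n + B) :
    0 ≤ realWrightTerm α β A B R n := by
  unfold realWrightTerm
  positivity

lemma realWrightTerm_succ_le (hα : 0 < α) (hβ : 0 < β) (hR : 0 ≤ R) {n : ℕ}
    (hx : 0 < α * n + A) (hy : 1 < β * n + B) :
    realWrightTerm α β A B R (n + 1) ≤
      (α * n + (A + α)) ^ α / ((β * n + (B - 1)) ^ β * (n + 1)) * R *
        realWrightTerm α β A B R n := by
  have hup := Real.Gamma_add_le_Gamma_mul_rpow hx hα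
  have hlo := Real.Gamma_mul_rpow_le_Gamma_add hy hβ
  unfold realWrightTerm
  rw [Nat.factorial_succ]
  push_cast
  calc Real.Gamma (α * (n + 1) + A) / Real.Gamma (β * (n + 1) + B) * R ^ (n + 1) /
        ((n + 1) * n.factorial)
      = Real.Gamma (α * n + A + α) / Real.Gamma (β * n + B + β) * R ^ (n + 1) /
          ((n + 1) * n.factorial) := by
        ring_nf
    _ ≤ Real.Gamma (α * n + A) * (α * n + A + α) ^ α /
          (Real.Gamma (β * n + B) * (β * n + B - 1) ^ β) * R ^ (n + 1) /
          ((n + 1) * n.factorial) := by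
        gcongr
    _ = _ := by
        rw [add_assoc, ← add_sub_assoc]
        field_simp
        ring

lemma summable_realWrightTerm (hα : 0 < α) (hβ : 0 < β) (hκ : α < β + 1) (hR : 0 ≤ R) :
    Summable (realWrightTerm α β A B R) := by
  have hratio : Tendsto (fun n : ℕ =>
      (α * n + (A + α)) ^ α / ((β * n + (B - 1)) ^ β * (n + 1)) * R) atTop (𝓝 0) := by
    simpa using ((tendsto_affine_rpow_div_affine_rpow_mul_atTop hα hβ (A + α) (B - 1) hκ).comp
      tendsto_natCast_atTop_atTop).mul_const R
  refine summable_of_ratio_norm_eventually_le (r := 1 / 2) (by norm_num) ?_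
  filter_upwards [eventually_lt_mul_natCast_add hα A 0, eventually_lt_mul_natCast_add hβ B 1,
    hratio.eventually (eventually_le_nhds (by norm_num : (0 : ℝ) < 1 / 2))] with n hx hy hρ
  have hnonneg : 0 ≤ realWrightTerm α β A B R n := realWrightTerm_nonneg hR hx (by linarith)
  have hnonneg_succ : 0 ≤ realWrightTerm α β A B R (n + 1) :=
    realWrightTerm_nonneg hR (by push_cast; linarith) (by push_cast; linarith)
  rw [Real.norm_of_nonneg hnonneg, Real.norm_of_nonneg hnonneg_succ]
  exact (realWrightTerm_succ_le hα hβ hR hx hy).trans (mul_le_mul_of_nonneg_right hρ hnonneg)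

end RealWrightTerm

open Complex

theorem wright_series_summable_general (α β : ℝ) (hα : 0 < α) (hβ : 0 < β) (hκ : 0 < 1 + β - α)
    (a b : ℂ) (z : ℂ) :
    Summable fun n : ℕ =>
      ‖(Complex.Gamma ((α : ℂ) * n + a) / Complex.Gamma ((β : ℂ) * n + b)) *
        z ^ n / n.factorial‖ := by
  refine Summable.of_norm_bounded_eventually_nat
    ((summable_realWrightTerm (A := a.re) (B := b.re) hα hβ (by linarith)
      (norm_nonneg z)).div_const ‖Gamma (1 + b.im * I)‖) ?_
  filter_upwards [eventually_lt_mul_natCast_add hα a.re 0,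
    eventually_lt_mul_natCast_add hβ b.re 1] with n hx hy
  have hbound := norm_Gamma_div_Gamma_le (s := (α : ℂ) * n + a) (w := (β : ℂ) * n + b)
    (by simpa using hx) (by simpa using hy)
  simp only [add_re, add_im, mul_re, mul_im, ofReal_re, ofReal_im, natCast_re, natCast_im,
    mul_zero, zero_mul, sub_zero, add_zero, zero_add] at hbound
  rw [norm_norm, norm_div, norm_mul, norm_pow, Complex.norm_natCast]
  calc _ ≤ Real.Gamma (α * n + a.re) / Real.Gamma (β * n + b.re) / ‖Gamma (1 + b.im * I)‖ *
        ‖z‖ ^ n / n.factorial := by gcongr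
    _ = _ := by unfold realWrightTerm; ring

/-- The Wright series `₁Ψ₁((α,a);(β,b) | z) = ∑ Γ(αn+a)/Γ(βn+b) · zⁿ/n!` converges
absolutely for every `z ∈ ℂ` when `α, β > 0` and `κ = 1 + β − α > 0`. -/
theorem wright_series_summable (α β : ℝ) (hα : 0 < α) (hβ : 0 < β) (hκ : 0 < 1 + β - α)
    (a b : ℂ) (hpole : ∀ n m : ℕ, (α : ℂ) * (n : ℂ) + a ≠ -(m : ℂ)) (z : ℂ) :
    Summable fun n : ℕ =>
      ‖(Complex.Gamma ((α : ℂ) * n + a) / Complex.Gamma ((β : ℂ) * n + b)) *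
        z ^ n / n.factorial‖ :=
  wright_series_summable_general α β hα hβ hκ a b z
end

section
/- There exist ε > 0 and a function τ : ℂ → ℂ analytic on the ball of radius ε about 0 such that τ(0) = 1, τ(w) − log τ(w) − 1 = w²/2 for all |w| < ε (with log the principal branch), and whose Taylor coefficients at 0 of orders 1 through 5 are 1, 1/3, 1/36, −1/270, 1/4320 respectively; that is, τ(w) = 1 + w + (1/3)w² + (1/36)w³ − (1/270)w⁴ + (1/4320)w⁵ + O(w⁶) as w → 0. -/
/-!
Write `log (1 + x) = x + x ^ 2 * r x` with `r` analytic and `r 0 = -1/2`. Then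
`w τ = (τ - 1) * √(-2 r (τ - 1))` is analytic at `1` with `w 1 = 0`, `w' 1 = 1` and
`w τ ^ 2 / 2 = τ - log τ - 1` identically, so `τ(w)` is its analytic local inverse.
Differentiating the relation gives `τ'(t) (τ(t) - 1) = t τ(t)`; Leibniz' rule turns the `n`-th
derivative of this identity at `0` into a recurrence fixing the Taylor coefficients one after
another.
-/

open Complex Filter Topology Function FormalMultilinearSeries

theorem HasFPowerSeriesAt.iterate_dslope_apply_self {𝕜 E : Type*} [NontriviallyNormedField 𝕜]
    [NormedAddCommGroup E] [NormedSpace 𝕜 E] {f : 𝕜 → E} {p : FormalMultilinearSeries 𝕜 𝕜 E}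
    {z₀ : 𝕜} (hp : HasFPowerSeriesAt f p z₀) (n : ℕ) :
    (swap dslope z₀)^[n] f z₀ = p.coeff n := by
  rw [← (hp.has_fpower_series_iterate_dslope_fslope n).coeff_zero 1, ← coeff, coeff_iterate_fslope,
    zero_add]

/-- `(log (1 + x) - x) / x ^ 2`, with the removable singularity at `0` filled in. -/
noncomputable def logRem : ℂ → ℂ := (swap dslope 0)^[2] fun x ↦ log (1 + x)

theorem analyticAt_logRem : AnalyticAt ℂ logRem 0 :=
  (hasFPowerSeriesAt_clog_one_add.has_fpower_series_iterate_dslope_fslope 2).analyticAt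

theorem logRem_zero : logRem 0 = -1 / 2 := by
  rw [logRem, hasFPowerSeriesAt_clog_one_add.iterate_dslope_apply_self, coeff_ofScalars]
  norm_num

theorem log_one_add_eq_logRem (x : ℂ) : log (1 + x) = x + x ^ 2 * logRem x := by
  set f : ℂ → ℂ := fun x ↦ log (1 + x)
  have hslope : dslope f 0 0 = 1 := by
    simpa using hasFPowerSeriesAt_clog_one_add.iterate_dslope_apply_self 1
  have hf := sub_smul_dslope f 0 x
  have hq := sub_smul_dslope (dslope f 0) 0 x
  have hrem : logRem x = dslope (dslope f 0) 0 x := rfl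
  simp only [f, sub_zero, add_zero, log_one, smul_eq_mul, hslope] at hf hq
  rw [hrem]
  linear_combination -hf - x * hq

noncomputable def sqrtFactor (τ : ℂ) : ℂ := (-2 * logRem (τ - 1)) ^ (2⁻¹ : ℂ)

theorem sqrtFactor_one : sqrtFactor 1 = 1 := by
  norm_num [sqrtFactor, logRem_zero]

theorem analyticAt_sqrtFactor : AnalyticAt ℂ sqrtFactor 1 := by
  have hrem : AnalyticAt ℂ (fun τ ↦ logRem (τ - 1)) 1 :=
    analyticAt_logRem.comp_of_eq (f := fun τ : ℂ ↦ τ - 1) (by fun_prop) (sub_self 1)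
  have hslit : -2 * logRem (1 - 1) ∈ slitPlane := by
    rw [sub_self, logRem_zero]; norm_num
  exact (analyticAt_const.mul hrem).cpow analyticAt_const hslit

noncomputable def wOfTau (τ : ℂ) : ℂ := (τ - 1) * sqrtFactor τ

theorem wOfTau_sq_div_two (τ : ℂ) : wOfTau τ ^ 2 / 2 = τ - log τ - 1 := by
  have h := log_one_add_eq_logRem (τ - 1)
  rw [add_sub_cancel] at h
  rw [wOfTau, sqrtFactor, mul_pow, cpow_ofNat_inv_pow, h]
  ring

theorem wOfTau_one : wOfTau 1 = 0 := by simp [wOfTau]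

theorem hasDerivAt_wOfTau_one : HasDerivAt wOfTau 1 1 := by
  have h := ((hasDerivAt_id' (1 : ℂ)).sub_const 1).fun_mul
    analyticAt_sqrtFactor.differentiableAt.hasDerivAt
  rwa [sqrtFactor_one, sub_self, zero_mul, one_mul, add_zero] at h

theorem analyticAt_wOfTau : AnalyticAt ℂ wOfTau 1 :=
  (analyticAt_id.sub analyticAt_const).mul analyticAt_sqrtFactor

theorem exists_analyticAt_reversion : ∃ τ : ℂ → ℂ, AnalyticAt ℂ τ 0 ∧ τ 0 = 1 ∧
    deriv τ 0 = 1 ∧ ∀ᶠ t in 𝓝 0, τ t - log (τ t) - 1 = t ^ 2 / 2 := by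
  have hw' : deriv wOfTau 1 ≠ 0 := by rw [hasDerivAt_wOfTau_one.deriv]; exact one_ne_zero
  have hw := analyticAt_wOfTau.hasStrictDerivAt
  refine ⟨hw.localInverse _ _ _ hw', wOfTau_one ▸ analyticAt_wOfTau.analyticAt_localInverse hw',
    ?_, ?_, ?_⟩
  · rw [← wOfTau_one]; exact (hw.hasStrictFDerivAt_equiv hw').localInverse_apply_image
  · simpa [wOfTau_one, hasDerivAt_wOfTau_one.deriv] using (hw.to_localInverse hw').hasDerivAt.deriv
  · rw [← wOfTau_one]
    filter_upwards [hw.eventually_right_inverse hw'] with t ht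
    rw [← wOfTau_sq_div_two, ht]

theorem eventuallyEq_deriv_mul_sub_deriv {τ : ℂ → ℂ} (hτ : AnalyticAt ℂ τ 0) (h0 : τ 0 = 1)
    (hrel : ∀ᶠ t in 𝓝 0, τ t - log (τ t) - 1 = t ^ 2 / 2) :
    (fun t ↦ deriv τ t * τ t - deriv τ t) =ᶠ[𝓝 0] fun t ↦ t * τ t := by
  have hslit : ∀ᶠ t in 𝓝 0, τ t ∈ slitPlane :=
    hτ.continuousAt.eventually_mem (isOpen_slitPlane.mem_nhds (h0 ▸ one_mem_slitPlane))
  filter_upwards [hτ.eventually_analyticAt, hslit, hrel.eventually_nhds] with t hτt hslit hrelt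
  have hτ' := hτt.differentiableAt.hasDerivAt
  have hsq : HasDerivAt (fun s ↦ s ^ 2 / 2) t t := by
    simpa using (hasDerivAt_pow 2 t).div_const 2
  have h := ((hτ'.sub (hτ'.clog hslit)).sub_const 1).unique (hsq.congr_of_eventuallyEq hrelt)
  have hne : τ t ≠ 0 := slitPlane_ne_zero hslit
  field_simp at h
  linear_combination h

section Recurrence

variable {𝕜 : Type*} [NontriviallyNormedField 𝕜] [CompleteSpace 𝕜] {τ : 𝕜 → 𝕜}

open Finset in
theorem iteratedDeriv_recurrence_of_eventuallyEq (hτ : AnalyticAt 𝕜 τ 0)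
    (hode : (fun t ↦ deriv τ t * τ t - deriv τ t) =ᶠ[𝓝 0] fun t ↦ t * τ t) (n : ℕ) :
    ∑ i ∈ range (n + 1), n.choose i * iteratedDeriv (i + 1) τ 0 * iteratedDeriv (n - i) τ 0
      - iteratedDeriv (n + 1) τ 0 = n * iteratedDeriv (n - 1) τ 0 := by
  have h := hode.iteratedDeriv_eq n
  rw [iteratedDeriv_fun_sub (hτ.deriv.contDiffAt.mul hτ.contDiffAt) hτ.deriv.contDiffAt,
    iteratedDeriv_fun_mul hτ.deriv.contDiffAt hτ.contDiffAt,
    iteratedDeriv_fun_mul contDiffAt_fun_id hτ.contDiffAt] at h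
  simp only [← iteratedDeriv_succ', iteratedDeriv_fun_id_zero] at h
  rw [h]
  rcases n with _ | n
  · simp
  · rw [sum_eq_single 1 (fun i _ hi ↦ by simp [hi]) (by simp)]
    simp

theorem iteratedDeriv_two_to_five_of_eventuallyEq [CharZero 𝕜] (hτ : AnalyticAt 𝕜 τ 0)
    (h0 : τ 0 = 1) (h1 : deriv τ 0 = 1)
    (hode : (fun t ↦ deriv τ t * τ t - deriv τ t) =ᶠ[𝓝 0] fun t ↦ t * τ t) :
    iteratedDeriv 2 τ 0 = 2 / 3 ∧ iteratedDeriv 3 τ 0 = 1 / 6 ∧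
      iteratedDeriv 4 τ 0 = -4 / 45 ∧ iteratedDeriv 5 τ 0 = 1 / 36 := by
  have r := iteratedDeriv_recurrence_of_eventuallyEq hτ hode
  have r2 := r 2
  have r3 := r 3
  have r4 := r 4
  have r5 := r 5
  -- `τ 0 = 1` cancels the top derivative, so the `n`-th relation is linear in `iteratedDeriv n τ 0`
  norm_num [Finset.sum_range_succ, Nat.choose, h0, h1] at r2 r3 r4 r5
  have e2 : iteratedDeriv 2 τ 0 = 2 / 3 := by linear_combination r2 / 3
  have e3 : iteratedDeriv 3 τ 0 = 1 / 6 := by rw [e2] at r3; linear_combination r3 / 4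
  have e4 : iteratedDeriv 4 τ 0 = -4 / 45 := by rw [e2, e3] at r4; linear_combination r4 / 5
  have e5 : iteratedDeriv 5 τ 0 = 1 / 36 := by rw [e2, e3, e4] at r5; linear_combination r5 / 6
  exact ⟨e2, e3, e4, e5⟩

end Recurrence

/-- Reversion of the mapping `½w² = τ − log τ − 1`: there is an analytic function `τ(w)`
near `0` with `τ(0) = 1`, satisfying `τ(w) − log τ(w) − 1 = w²/2`, whose Taylor expansion is
`τ(w) = 1 + w + w²/3 + w³/36 − w⁴/270 + w⁵/4320 + O(w⁶)`. -/
theorem tau_reversion :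
    ∃ ε > (0 : ℝ), ∃ τ : ℂ → ℂ,
      AnalyticOnNhd ℂ τ (Metric.ball 0 ε) ∧
      τ 0 = 1 ∧
      (∀ w ∈ Metric.ball (0 : ℂ) ε, τ w - Complex.log (τ w) - 1 = w ^ 2 / 2) ∧
      iteratedDeriv 1 τ 0 / (Nat.factorial 1) = 1 ∧
      iteratedDeriv 2 τ 0 / (Nat.factorial 2) = 1 / 3 ∧
      iteratedDeriv 3 τ 0 / (Nat.factorial 3) = 1 / 36 ∧
      iteratedDeriv 4 τ 0 / (Nat.factorial 4) = -(1 / 270) ∧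
      iteratedDeriv 5 τ 0 / (Nat.factorial 5) = 1 / 4320 := by
  obtain ⟨τ, hτ, h0, h1, hrel⟩ := exists_analyticAt_reversion
  obtain ⟨e2, e3, e4, e5⟩ :=
    iteratedDeriv_two_to_five_of_eventuallyEq hτ h0 h1 (eventuallyEq_deriv_mul_sub_deriv hτ h0 hrel)
  obtain ⟨ε, hε, hball⟩ := Metric.eventually_nhds_iff_ball.mp (hτ.eventually_analyticAt.and hrel)
  refine ⟨ε, hε, τ, fun w hw ↦ (hball w hw).1, h0, fun w hw ↦ (hball w hw).2, ?_, ?_, ?_, ?_, ?_⟩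
  · rw [iteratedDeriv_one, h1]; norm_num
  · rw [e2]; norm_num [Nat.factorial]
  · rw [e3]; norm_num [Nat.factorial]
  · rw [e4]; norm_num [Nat.factorial]
  · rw [e5]; norm_num [Nat.factorial]
end
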